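/- Let n ≥ 3. The number of permutations π in S_n that avoid 123 as a consecutive pattern and satisfy ides(π) = 1 is 4 if n is odd and 5 if n is even. -/

import Mathlib

open Finset

/-- The 1-based word of values of a permutation `π ∈ S_n`: `val π i` is the value
(in `{1, …, n}`) of `π` at the 1-based position `i`, and `0` if `i` is out of range. -/
def pval {n : ℕ} (π : Equiv.Perm (Fin n)) (i : ℕ) : ℕ :=
  if h : 1 ≤ i ∧ i - 1 < n then (π ⟨i - 1, h.2⟩ : ℕ) + 1 else 0

/-- The descent set of `π ∈ S_n`: the set of `i ∈ [n-1]` with `π_i > π_{i+1}`. -/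
def desSet {n : ℕ} (π : Equiv.Perm (Fin n)) : Finset ℕ :=
  (Finset.Icc 1 (n - 1)).filter (fun i => pval π (i + 1) < pval π i)

/-- The descent number. -/
def des {n : ℕ} (π : Equiv.Perm (Fin n)) : ℕ := (desSet π).card

/-- The major index: the sum of the descents. -/
def maj {n : ℕ} (π : Equiv.Perm (Fin n)) : ℕ := ∑ i ∈ desSet π, i

/-- The comajor index: `comaj π = ∑_{i ∈ Des π} (n - i)`. -/
def comaj {n : ℕ} (π : Equiv.Perm (Fin n)) : ℕ := ∑ i ∈ desSet π, (n - i)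

/-- The peak number: the number of `i` with `2 ≤ i ≤ n-1` and `π_{i-1} < π_i > π_{i+1}`. -/
def pk {n : ℕ} (π : Equiv.Perm (Fin n)) : ℕ :=
  ((Finset.Icc 2 (n - 1)).filter
    (fun i => pval π (i - 1) < pval π i ∧ pval π (i + 1) < pval π i)).card

/-- The left peak number: the number of `i ∈ [n-1]` which are peaks of `π`, or `i = 1`
when `1` is a descent (equivalently, peaks of `0π`; note `pval π 0 = 0`). -/
def lpk {n : ℕ} (π : Equiv.Perm (Fin n)) : ℕ :=
  ((Finset.Icc 1 (n - 1)).filter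
    (fun i => pval π (i - 1) < pval π i ∧ pval π (i + 1) < pval π i)).card

/-- Inverse descent number. -/
def ides {n : ℕ} (π : Equiv.Perm (Fin n)) : ℕ := des π⁻¹

/-- Inverse major index. -/
def imaj {n : ℕ} (π : Equiv.Perm (Fin n)) : ℕ := maj π⁻¹

/-- Inverse comajor index. -/
def icomaj {n : ℕ} (π : Equiv.Perm (Fin n)) : ℕ := comaj π⁻¹

/-- Inverse peak number. -/
def ipk {n : ℕ} (π : Equiv.Perm (Fin n)) : ℕ := pk π⁻¹

/-- Inverse left peak number. -/
def ilpk {n : ℕ} (π : Equiv.Perm (Fin n)) : ℕ := lpk π⁻¹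

/-- The reverse `π^r` of `π`, with `(π^r)_i = π_{n+1-i}`. -/
def prev {n : ℕ} (π : Equiv.Perm (Fin n)) : Equiv.Perm (Fin n) :=
  (Fin.revPerm : Equiv.Perm (Fin n)).trans π

/-- The complement `π^c` of `π`, with `(π^c)_i = n + 1 - π_i`. -/
def pcomp {n : ℕ} (π : Equiv.Perm (Fin n)) : Equiv.Perm (Fin n) :=
  π.trans (Fin.revPerm : Equiv.Perm (Fin n))

/-- The reverse-complement `π^{rc} = (π^r)^c` of `π`. -/
def prc {n : ℕ} (π : Equiv.Perm (Fin n)) : Equiv.Perm (Fin n) := pcomp (prev π)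


/-- `π ∈ S_n` avoids `123` as a consecutive pattern: there is no (1-based) index `i`
with `π_i < π_{i+1} < π_{i+2}`. -/
def Avoids123 {n : ℕ} (π : Equiv.Perm (Fin n)) : Prop :=
  ∀ i : ℕ, 1 ≤ i → i + 2 ≤ n →
    ¬ (pval π i < pval π (i + 1) ∧ pval π (i + 1) < pval π (i + 2))

/-!
If `ides π = 1`, with the descent of `π⁻¹` at `k`, then `π` is a shuffle of the increasing words
`1 ⋯ k` and `k+1 ⋯ n`; it is determined by the word `w` recording which positions carry a value
`≤ k`, and `π` has a descent at `i` exactly when `w` has an ascent there (`w i = false`,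
`w (i+1) = true`). Two such ascents are never adjacent, while avoiding consecutive `123` demands
one in every window of length three, so they sit at every other position. Hence `w` alternates strictly between its second and
its last-but-one letter and is determined by the triple `(w 1, w 2, w n)`; the admissible triples
are counted directly.
-/

theorem lt_of_forall_lt_succ {β : Type*} [Preorder β] {f : ℕ → β} {a b : ℕ}
    (h : ∀ v, a ≤ v → v < b → f v < f (v + 1)) (hab : a < b) : f a < f b := by
  induction b, hab using Nat.le_induction with
  | base => exact h a le_rfl (lt_add_one a)
  | succ b hb ih => exact (ih fun v h1 h2 => h v h1 (by omega)).trans (h b (by omega) (by omega))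

section Pval

variable {n : ℕ} (π : Equiv.Perm (Fin n))

theorem pval_eq {i : ℕ} (h1 : 1 ≤ i) (h2 : i ≤ n) :
    pval π i = (π ⟨i - 1, by omega⟩ : ℕ) + 1 :=
  dif_pos ⟨h1, by omega⟩

theorem one_le_pval {i : ℕ} (h1 : 1 ≤ i) (h2 : i ≤ n) : 1 ≤ pval π i := by
  rw [pval_eq π h1 h2]; omega

theorem pval_le {i : ℕ} (h1 : 1 ≤ i) (h2 : i ≤ n) : pval π i ≤ n := by
  rw [pval_eq π h1 h2]; exact (π _).isLt

theorem pval_inv_pval {i : ℕ} (h1 : 1 ≤ i) (h2 : i ≤ n) : pval π⁻¹ (pval π i) = i := by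
  rw [pval_eq π⁻¹ (one_le_pval π h1 h2) (pval_le π h1 h2)]
  simp only [pval_eq π h1 h2, Nat.add_sub_cancel, Fin.eta, Equiv.Perm.inv_def,
    Equiv.symm_apply_apply]
  omega

theorem pval_pval_inv {v : ℕ} (h1 : 1 ≤ v) (h2 : v ≤ n) : pval π (pval π⁻¹ v) = v := by
  simpa using pval_inv_pval π⁻¹ h1 h2

theorem pval_injOn : Set.InjOn (pval π) (Set.Icc 1 n) := fun i hi j hj h => by
  rw [← pval_inv_pval π hi.1 hi.2, h, pval_inv_pval π hj.1 hj.2]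

theorem ext_pval {π' : Equiv.Perm (Fin n)}
    (h : ∀ i, 1 ≤ i → i ≤ n → pval π i = pval π' i) : π = π' := by
  ext x
  have := h (x + 1) (by omega) x.isLt
  simp only [pval_eq _ (Nat.le_add_left 1 x) x.isLt, Nat.add_sub_cancel, Fin.eta] at this
  omega

theorem card_filter_pval_le {v : ℕ} (hv : v ≤ n) : #{j ∈ Icc 1 n | pval π j ≤ v} = v := by
  refine (card_nbij' (s := _) (t := Icc 1 v) (pval π) (pval π⁻¹) (fun j hj => ?_) (fun u hu => ?_)
    (fun j hj => ?_) (fun u hu => ?_)).trans (by simp) <;>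
    simp only [mem_coe, mem_filter, mem_Icc] at *
  · exact ⟨one_le_pval π hj.1.1 hj.1.2, hj.2⟩
  · rw [pval_pval_inv π hu.1 (by omega)]
    exact ⟨⟨one_le_pval π⁻¹ hu.1 (by omega), pval_le π⁻¹ hu.1 (by omega)⟩, hu.2⟩
  · exact pval_inv_pval π hj.1.1 hj.1.2
  · exact pval_pval_inv π hu.1 (by omega)

theorem mem_desSet {v : ℕ} : v ∈ desSet π ↔ 1 ≤ v ∧ v + 1 ≤ n ∧ pval π (v + 1) < pval π v := by
  simp only [desSet, mem_filter, mem_Icc]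
  omega

theorem pval_lt_pval_succ {v : ℕ} (h1 : 1 ≤ v) (h2 : v + 1 ≤ n) (hv : v ∉ desSet π) :
    pval π v < pval π (v + 1) := by
  have hne : pval π v ≠ pval π (v + 1) := fun h => by
    have := pval_injOn π ⟨h1, by omega⟩ ⟨by omega, h2⟩ h
    omega
  rw [mem_desSet] at hv
  omega

end Pval

section Word

variable (w : ℕ → Bool)

def wordCount (b : Bool) (i : ℕ) : ℕ := #{j ∈ Icc 1 i | w j = b}

theorem wordCount_mono (b : Bool) {i j : ℕ} (h : i ≤ j) : wordCount w b i ≤ wordCount w b j :=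
  card_le_card (filter_subset_filter _ (Icc_subset_Icc le_rfl h))

theorem wordCount_lt {b : Bool} {i j : ℕ} (h : i < j) (hj : w j = b) :
    wordCount w b i < wordCount w b j := by
  refine card_lt_card ⟨filter_subset_filter _ (Icc_subset_Icc le_rfl h.le), fun hsub => ?_⟩
  have := hsub (mem_filter.2 ⟨mem_Icc.2 ⟨by omega, le_rfl⟩, hj⟩)
  simp only [mem_filter, mem_Icc] at this
  omega

theorem wordCount_pos {b : Bool} {i : ℕ} (h : 1 ≤ i) (hi : w i = b) : 0 < wordCount w b i :=
  wordCount_lt w (i := 0) h hi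

theorem wordCount_true_add_false (i : ℕ) : wordCount w true i + wordCount w false i = i := by
  simp only [wordCount, Bool.eq_false_iff, ne_eq]
  rw [card_filter_add_card_filter_not, Nat.card_Icc, Nat.add_sub_cancel]

theorem wordCount_congr {w' : ℕ → Bool} {n : ℕ} (h : ∀ i, 1 ≤ i → i ≤ n → w i = w' i) (b : Bool)
    {i : ℕ} (hi : i ≤ n) : wordCount w b i = wordCount w' b i := by
  unfold wordCount
  congr 1
  refine filter_congr fun j hj => ?_
  rw [mem_Icc] at hj
  rw [h j hj.1 (by omega)]

/-- The value at position `i` of the shuffle of `1 ⋯ k` (placed at the `true` positions of `w`)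
and `k+1 ⋯ n` (placed at the `false` positions), where `k = wordCount w true n`. -/
def shuffleVal (n i : ℕ) : ℕ :=
  if w i then wordCount w true i else wordCount w true n + wordCount w false i

variable {w} {n i : ℕ}

theorem one_le_shuffleVal (h1 : 1 ≤ i) : 1 ≤ shuffleVal w n i := by
  unfold shuffleVal
  split_ifs with hi
  · exact wordCount_pos w h1 hi
  · exact le_add_left (wordCount_pos w h1 (Bool.eq_false_iff.2 hi))

theorem shuffleVal_le (h2 : i ≤ n) : shuffleVal w n i ≤ n := by
  have := wordCount_true_add_false w n
  have := wordCount_true_add_false w i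
  have := wordCount_mono w false h2
  unfold shuffleVal
  split_ifs <;> omega

theorem shuffleVal_le_iff (h1 : 1 ≤ i) (h2 : i ≤ n) :
    shuffleVal w n i ≤ wordCount w true n ↔ w i = true := by
  unfold shuffleVal
  split_ifs with hi
  · exact iff_of_true (wordCount_mono w true h2) hi
  · have := wordCount_pos w h1 (Bool.eq_false_iff.2 hi)
    exact iff_of_false (by omega) hi

theorem shuffleVal_lt_shuffleVal {j : ℕ} (hij : i < j) (hw : w i = w j) :
    shuffleVal w n i < shuffleVal w n j := by
  unfold shuffleVal
  rw [hw]
  cases hj : w j <;> have := wordCount_lt w hij hj <;> simp only [Bool.false_eq_true, ↓reduceIte]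
  · omega
  · exact this

theorem shuffleVal_injOn : Set.InjOn (shuffleVal w n) (Set.Icc 1 n) := by
  intro i hi j hj h
  by_contra hne
  have hij : w i = w j := by
    rw [Bool.eq_iff_iff, ← shuffleVal_le_iff hi.1 hi.2, ← shuffleVal_le_iff hj.1 hj.2, h]
  rcases Nat.lt_or_gt_of_ne hne with hlt | hlt
  · exact (shuffleVal_lt_shuffleVal hlt hij).ne h
  · exact (shuffleVal_lt_shuffleVal hlt hij.symm).ne h.symm

variable (w n) in
noncomputable def shuffle : Equiv.Perm (Fin n) :=
  Equiv.ofBijective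
    (fun p => ⟨shuffleVal w n (p + 1) - 1, by
      have := shuffleVal_le (w := w) (i := p + 1) p.2
      have := p.2
      omega⟩)
    (Finite.injective_iff_bijective.1 fun p q h => by
      have hp := one_le_shuffleVal (w := w) (n := n) (Nat.le_add_left 1 p)
      have hq := one_le_shuffleVal (w := w) (n := n) (Nat.le_add_left 1 q)
      have := shuffleVal_injOn (w := w) ⟨Nat.le_add_left 1 p, p.2⟩ ⟨Nat.le_add_left 1 q, q.2⟩
        (by simp only [Fin.mk.injEq] at h; omega)
      exact Fin.ext (by omega))

theorem pval_shuffle (h1 : 1 ≤ i) (h2 : i ≤ n) : pval (shuffle w n) i = shuffleVal w n i := by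
  rw [pval_eq _ h1 h2]
  change shuffleVal w n (i - 1 + 1) - 1 + 1 = _
  rw [Nat.sub_add_cancel h1]
  have := one_le_shuffleVal (w := w) (n := n) h1
  omega

theorem shuffle_congr {w' : ℕ → Bool} (h : ∀ i, 1 ≤ i → i ≤ n → w i = w' i) :
    shuffle w n = shuffle w' n := by
  refine ext_pval _ fun i h1 h2 => ?_
  rw [pval_shuffle h1 h2, pval_shuffle h1 h2, shuffleVal, shuffleVal, h i h1 h2,
    wordCount_congr w h _ le_rfl, wordCount_congr w h _ h2, wordCount_congr w h _ h2]

end Word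

section IsShuffle

variable {n : ℕ} {π : Equiv.Perm (Fin n)} {k : ℕ}

variable (π k) in
/-- `π` is a shuffle of the increasing words `1 ⋯ k` and `k+1 ⋯ n`. -/
def IsShuffle : Prop :=
  ∀ i j, 1 ≤ i → i < j → j ≤ n → (pval π i ≤ k ↔ pval π j ≤ k) → pval π i < pval π j

theorem isShuffle_iff_desSet_inv_subset : IsShuffle π k ↔ desSet π⁻¹ ⊆ {k} := by
  constructor
  · intro h v hv
    rw [mem_desSet] at hv
    obtain ⟨hv1, hvn, hlt⟩ := hv
    by_contra hvk
    rw [mem_singleton] at hvk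
    have := h _ _ (one_le_pval π⁻¹ (by omega) hvn) hlt (pval_le π⁻¹ hv1 (by omega))
    rw [pval_pval_inv π (by omega) hvn, pval_pval_inv π hv1 (by omega)] at this
    omega
  · intro h i j hi hij hj hclass
    by_contra hge
    have hne : pval π i ≠ pval π j := fun he => by
      have := pval_injOn π ⟨hi, by omega⟩ ⟨by omega, hj⟩ he
      omega
    -- `π⁻¹` ascends through the values from `pval π j` to `pval π i`, none of which is `k`
    have := lt_of_forall_lt_succ (f := pval π⁻¹) (fun v h1 h2 => by
        have := one_le_pval π (by omega) hj
        have := pval_le π hi (by omega)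
        refine pval_lt_pval_succ π⁻¹ (by omega) (by omega) fun hv => ?_
        have := mem_singleton.1 (h hv)
        omega) (show pval π j < pval π i by omega)
    rw [pval_inv_pval π (by omega) hj, pval_inv_pval π hi (by omega)] at this
    omega

theorem IsShuffle.le_iff (h : IsShuffle π k) {i j : ℕ} (hi : 1 ≤ i) (hin : i ≤ n) (hj : 1 ≤ j)
    (hjn : j ≤ n) (hclass : pval π i ≤ k ↔ pval π j ≤ k) : pval π j ≤ pval π i ↔ j ≤ i := by
  rcases lt_trichotomy i j with hij | rfl | hji
  · exact iff_of_false (not_le.2 (h i j hi hij hjn hclass)) (by omega)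
  · exact iff_of_true le_rfl le_rfl
  · exact iff_of_true (h j i hj hji hin hclass.symm).le hji.le

theorem IsShuffle.descent_iff (h : IsShuffle π k) {i : ℕ} (hi : 1 ≤ i) (hin : i + 1 ≤ n) :
    pval π (i + 1) < pval π i ↔ k < pval π i ∧ pval π (i + 1) ≤ k := by
  refine ⟨fun hlt => ?_, fun hik => by omega⟩
  by_contra hc
  have := h i (i + 1) hi (lt_add_one i) hin (by omega)
  omega

theorem IsShuffle.eq_shuffle (h : IsShuffle π k) :
    π = shuffle (fun i => decide (pval π i ≤ k)) n := by
  set w : ℕ → Bool := fun i => decide (pval π i ≤ k)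
  refine ext_pval _ fun i h1 h2 => ?_
  rw [pval_shuffle h1 h2, shuffleVal, ← card_filter_pval_le π (pval_le π h1 h2)]
  by_cases hik : pval π i ≤ k
  · rw [if_pos (decide_eq_true hik), wordCount]
    congr 1
    ext j
    simp only [mem_filter, mem_Icc, w, decide_eq_true_eq]
    by_cases hj : 1 ≤ j ∧ j ≤ n
    · by_cases hjk : pval π j ≤ k
      · rw [h.le_iff h1 h2 hj.1 hj.2 (iff_of_true hik hjk)]; omega
      · omega
    · omega
  · have hdisj : Disjoint {j ∈ Icc 1 n | w j = true} {j ∈ Icc 1 i | w j = false} :=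
      disjoint_left.2 fun j hj hj' => by simp_all
    rw [if_neg (by simpa [w] using hik), wordCount, wordCount, ← card_union_of_disjoint hdisj]
    congr 1
    ext j
    simp only [mem_filter, mem_union, mem_Icc, w, decide_eq_true_eq, decide_eq_false_iff_not]
    by_cases hj : 1 ≤ j ∧ j ≤ n
    · by_cases hjk : pval π j ≤ k
      · omega
      · rw [h.le_iff h1 h2 hj.1 hj.2 (iff_of_false hik hjk)]; omega
    · omega

theorem isShuffle_shuffle (w : ℕ → Bool) (n : ℕ) :
    IsShuffle (shuffle w n) (wordCount w true n) := by
  intro i j hi hij hj hclass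
  rw [pval_shuffle hi (by omega), pval_shuffle (by omega) hj] at hclass ⊢
  rw [shuffleVal_le_iff hi (by omega), shuffleVal_le_iff (by omega) hj, ← Bool.eq_iff_iff] at hclass
  exact shuffleVal_lt_shuffleVal hij hclass

end IsShuffle

section ShuffleDescents

def HasAscent (n : ℕ) (w : ℕ → Bool) : Prop :=
  ∃ i, 1 ≤ i ∧ i + 1 ≤ n ∧ w i = false ∧ w (i + 1) = true

variable {w : ℕ → Bool} {n : ℕ}

theorem shuffle_descent_iff {i : ℕ} (hi : 1 ≤ i) (hin : i + 1 ≤ n) :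
    pval (shuffle w n) (i + 1) < pval (shuffle w n) i ↔ w i = false ∧ w (i + 1) = true := by
  rw [(isShuffle_shuffle w n).descent_iff hi hin, pval_shuffle hi (by omega),
    pval_shuffle (by omega) hin, ← not_le, shuffleVal_le_iff hi (by omega),
    shuffleVal_le_iff (by omega) hin, Bool.not_eq_true]

theorem desSet_inv_shuffle (hw : HasAscent n w) :
    desSet (shuffle w n)⁻¹ = {wordCount w true n} := by
  obtain ⟨i, hi, hin, hwi, hwi'⟩ := hw
  have hsub := isShuffle_iff_desSet_inv_subset.1 (isShuffle_shuffle w n)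
  refine (subset_singleton_iff.1 hsub).resolve_left fun hempty => ?_
  -- with no inverse descent at all, `shuffle w n` would be a shuffle with `k = 0`, i.e. increasing
  have h0 := isShuffle_iff_desSet_inv_subset.2 (hempty ▸ empty_subset {0})
  have := (h0.descent_iff hi hin).1 ((shuffle_descent_iff hi hin).2 ⟨hwi, hwi'⟩)
  have := one_le_pval (shuffle w n) (Nat.le_add_left 1 i) hin
  omega

theorem ides_shuffle (hw : HasAscent n w) : ides (shuffle w n) = 1 := by
  rw [ides, des, desSet_inv_shuffle hw, card_singleton]

theorem exists_shuffle_of_ides_eq_one {π : Equiv.Perm (Fin n)} (h : ides π = 1) :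
    ∃ w : ℕ → Bool, π = shuffle w n := by
  obtain ⟨k, hk⟩ := card_eq_one.1 (show #(desSet π⁻¹) = 1 from h)
  exact ⟨_, (isShuffle_iff_desSet_inv_subset.2 hk.subset).eq_shuffle⟩

theorem eqOn_of_shuffle_eq {w' : ℕ → Bool} (hw : HasAscent n w) (hw' : HasAscent n w')
    (h : shuffle w n = shuffle w' n) : ∀ j, 1 ≤ j → j ≤ n → w j = w' j := by
  intro j hj hjn
  have hk := desSet_inv_shuffle hw
  rw [h, desSet_inv_shuffle hw', singleton_inj] at hk
  rw [Bool.eq_iff_iff, ← shuffleVal_le_iff hj hjn, ← shuffleVal_le_iff hj hjn,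
    ← pval_shuffle hj hjn, ← pval_shuffle hj hjn, h, hk]

end ShuffleDescents

theorem avoids123_iff {n : ℕ} (π : Equiv.Perm (Fin n)) : Avoids123 π ↔
    ∀ i, 1 ≤ i → i + 2 ≤ n → pval π (i + 1) < pval π i ∨ pval π (i + 2) < pval π (i + 1) := by
  refine forall₃_congr fun i h1 h2 => ?_
  have h01 : pval π i ≠ pval π (i + 1) := fun h => by
    have := pval_injOn π ⟨h1, by omega⟩ ⟨by omega, by omega⟩ h
    omega
  have h12 : pval π (i + 1) ≠ pval π (i + 2) := fun h => by
    have := pval_injOn π ⟨by omega, by omega⟩ ⟨by omega, h2⟩ h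
    omega
  omega

section Zigzag

def Zigzag (n : ℕ) (w : ℕ → Bool) : Prop :=
  ∀ i, 1 ≤ i → i + 2 ≤ n →
    (w i = false ∧ w (i + 1) = true) ∨ (w (i + 1) = false ∧ w (i + 2) = true)

def zigzagWord (n : ℕ) (t : Bool × Bool × Bool) (i : ℕ) : Bool :=
  if i = 1 then t.1 else if i = n then t.2.2 else decide (i % 2 = 0 ↔ t.2.1 = true)

/-- The triples `(w 1, w 2, w n)` of zigzag words `w` of length `n`. -/
def ZigzagEnds (n : ℕ) (t : Bool × Bool × Bool) : Prop :=
  (t.2.1 = true → t.1 = false) ∧ (t.2.2 = false → (t.2.1 = true ↔ Odd n))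

theorem card_zigzagEnds (n : ℕ) : Nat.card {t // ZigzagEnds n t} = if Odd n then 4 else 5 := by
  by_cases h : Odd n <;> simp only [ZigzagEnds, h, iff_true, iff_false, if_true, if_false] <;>
    rw [Nat.card_eq_fintype_card] <;> rfl

variable {n : ℕ} {w : ℕ → Bool}

theorem avoids123_shuffle_iff : Avoids123 (shuffle w n) ↔ Zigzag n w := by
  rw [avoids123_iff]
  refine forall₃_congr fun i h1 h2 => ?_
  rw [shuffle_descent_iff h1 (by omega), shuffle_descent_iff (i := i + 1) (by omega) h2]

theorem zigzagWord_ends (hn : 3 ≤ n) (t : Bool × Bool × Bool) :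
    (zigzagWord n t 1, zigzagWord n t 2, zigzagWord n t n) = t := by
  obtain ⟨a, b, c⟩ := t
  cases b <;> simp [zigzagWord, show n ≠ 1 by omega, show 2 ≠ n by omega]

theorem Zigzag.hasAscent (hz : Zigzag n w) (hn : 3 ≤ n) : HasAscent n w := by
  rcases hz 1 le_rfl hn with h | h
  · exact ⟨1, le_rfl, by omega, h⟩
  · exact ⟨2, by omega, hn, h⟩

theorem Zigzag.apply_succ (hz : Zigzag n w) {i : ℕ} (hi : 2 ≤ i) (hin : i + 2 ≤ n) :
    w (i + 1) = !w i := by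
  have h := hz (i - 1) (by omega) (by omega)
  rw [show i - 1 + 1 = i by omega, show i - 1 + 2 = i + 1 by omega] at h
  have h' := hz i (by omega) hin
  cases hwi : w i <;> cases hwi' : w (i + 1) <;> simp_all

theorem Zigzag.apply_eq (hz : Zigzag n w) {i : ℕ} (hi : 2 ≤ i) (hin : i + 1 ≤ n) :
    w i = decide (i % 2 = 0 ↔ w 2 = true) := by
  induction i, hi using Nat.le_induction with
  | base => cases w 2 <;> simp
  | succ i hi ih =>
    rw [hz.apply_succ hi hin, ih (by omega)]
    cases w 2 <;> rw [Bool.eq_iff_iff] <;> simp <;> omega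

theorem Zigzag.eq_zigzagWord (hz : Zigzag n w) {i : ℕ} (hi : 1 ≤ i) (hin : i ≤ n) :
    w i = zigzagWord n (w 1, w 2, w n) i := by
  unfold zigzagWord
  split_ifs with h1 hn
  · rw [h1]
  · rw [hn]
  · exact hz.apply_eq (by omega) (by omega)

theorem Zigzag.zigzagEnds (hz : Zigzag n w) (hn : 3 ≤ n) : ZigzagEnds n (w 1, w 2, w n) := by
  refine ⟨fun h2 => ?_, fun hlast => ?_⟩
  · have := hz 1 le_rfl hn
    simp_all
  · have h := hz (n - 2) (by omega) (by omega)
    rw [show n - 2 + 1 = n - 1 by omega, show n - 2 + 2 = n by omega] at h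
    have := hz.apply_eq (i := n - 1) (by omega) (by omega)
    rw [Nat.odd_iff]
    cases h2 : w 2 <;> simp_all <;> omega

theorem zigzag_zigzagWord (hn : 3 ≤ n) {t : Bool × Bool × Bool} (ht : ZigzagEnds n t) :
    Zigzag n (zigzagWord n t) := by
  obtain ⟨a, b, c⟩ := t
  intro i h1 h2
  simp only [ZigzagEnds, Nat.odd_iff] at ht
  cases a <;> cases b <;> cases c <;> simp [zigzagWord] at ht ⊢ <;> omega

end Zigzag

/-- For `n ≥ 3`, the number of permutations in `S_n` avoiding `123`
as a consecutive pattern with `ides(π) = 1` is `4` if `n` is odd and `5` if `n` is even. -/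
theorem count_avoids123_ides_one {n : ℕ} (hn : 3 ≤ n) :
    Nat.card { π : Equiv.Perm (Fin n) // Avoids123 π ∧ ides π = 1 } =
      if Odd n then 4 else 5 := by
  have hmem (t : {t // ZigzagEnds n t}) :
      Avoids123 (shuffle (zigzagWord n t.1) n) ∧ ides (shuffle (zigzagWord n t.1) n) = 1 := by
    have hz := zigzag_zigzagWord hn t.2
    exact ⟨avoids123_shuffle_iff.2 hz, ides_shuffle (hz.hasAscent hn)⟩
  rw [← card_zigzagEnds n]
  refine (Nat.card_eq_of_bijective (fun t => ⟨_, hmem t⟩) ⟨fun t t' h => ?_, ?_⟩).symm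
  · have heq := eqOn_of_shuffle_eq ((zigzag_zigzagWord hn t.2).hasAscent hn)
      ((zigzag_zigzagWord hn t'.2).hasAscent hn) (congrArg Subtype.val h)
    rw [Subtype.ext_iff, ← zigzagWord_ends hn t.1, ← zigzagWord_ends hn t'.1,
      heq 1 le_rfl (by omega), heq 2 (by omega) (by omega), heq n (by omega) le_rfl]
  · rintro ⟨π, hav, hides⟩
    obtain ⟨w, rfl⟩ := exists_shuffle_of_ides_eq_one hides
    have hz := avoids123_shuffle_iff.1 hav
    exact ⟨⟨_, hz.zigzagEnds hn⟩,
      Subtype.ext (shuffle_congr fun i hi hin => hz.eq_zigzagWord hi hin).symm⟩
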